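/- Under the stated assumptions on V, for every j ∈ ℤ and every r = 1, …, p the auxiliary variables satisfy the recursion iω Ψ̂^{(r)}_j = (ṽ_{j+r} − ṽ_{j+r−2})/(2h) + (σ_{j−1} Ψ̂^{(r)}_j + σ_j Ψ̂^{(r)}_{j+1})/2 + Σ_{ℓ=1}^{r−1} (σ_{j+ℓ} Ψ̂^{(r−ℓ)}_{j+ℓ+1} − σ_{j+ℓ−2} Ψ̂^{(r−ℓ)}_{j+ℓ−1})/2. -/

import Mathlib

/-- The discrete complex stretching grid
`Z_{j,k} = (j+k)h + i(h/ω) Σ_{ℓ=0}^{k-1} σ_ℓ` (the sum being 0 for `k ≤ 0`). -/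
noncomputable def Zmap (h ω : ℝ) (σ : ℤ → ℝ) (j k : ℤ) : ℂ :=
  ((j + k : ℤ) : ℂ) * (h : ℂ) +
    Complex.I * ((h : ℂ) / (ω : ℂ)) * ∑ l ∈ Finset.range k.toNat, ((σ l : ℝ) : ℂ)

/-- Discrete holomorphicity with respect to the grid `Zmap h ω σ`: the discrete
Cauchy–Riemann equations hold on every face. -/
def DiscreteHolo (h ω : ℝ) (σ : ℤ → ℝ) (F : ℤ → ℤ → ℂ) : Prop :=
  ∀ j k : ℤ,
    (F (j + 1) (k + 1) - F j k) * (Zmap h ω σ j (k + 1) - Zmap h ω σ (j + 1) k) =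
    (F j (k + 1) - F (j + 1) k) * (Zmap h ω σ (j + 1) (k + 1) - Zmap h ω σ j k)

/-- The auxiliary variable `Φ̂^{(r)}_j = (V_{−r+1,j+1} − V_{−r,j}) / (iω(2h + iσ_j h/ω))`. -/
noncomputable def PhiAux (h ω : ℝ) (σ : ℤ → ℝ) (V : ℤ → ℤ → ℂ) (r j : ℤ) : ℂ :=
  (V (-r + 1) (j + 1) - V (-r) j) /
    (Complex.I * (ω : ℂ) * (2 * (h : ℂ) + Complex.I * (σ j : ℂ) * (h : ℂ) / (ω : ℂ)))

/-- The auxiliary variable `Ψ̂^{(r)}_j = (V_{r,j} − V_{r−1,j−1}) / (iω(2h + iσ_{j−1} h/ω))`. -/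
noncomputable def PsiAux (h ω : ℝ) (σ : ℤ → ℝ) (V : ℤ → ℤ → ℂ) (r j : ℤ) : ℂ :=
  (V r j - V (r - 1) (j - 1)) /
    (Complex.I * (ω : ℂ) * (2 * (h : ℂ) + Complex.I * (σ (j - 1) : ℂ) * (h : ℂ) / (ω : ℂ)))

/-!
On each face of the stretched grid the diagonals are `Z_{j+1,k+1} − Z_{j,k} = 2h + i(h/ω)σ_k` and
`Z_{j,k+1} − Z_{j+1,k} = i(h/ω)σ_k`, so the discrete Cauchy–Riemann equation says that one step
along an antidiagonal changes `V` by `V_{m−1,n+1} − V_{m,n} = −hσ_n Ψ̂^{(m)}_{n+1}`. Telescoping along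
the antidiagonals from `(r, j)` and from `(r − 1, j − 1)` to the column `0` expresses
`ṽ_{j+r} − ṽ_{j+r−2}` through `V_{r,j} − V_{r−1,j−1}` and the `Ψ̂`'s, and unfolding the definition
of `Ψ̂^{(r)}_j` gives `iω Ψ̂^{(r)}_j = (V_{r,j} − V_{r−1,j−1})/(2h) + σ_{j−1} Ψ̂^{(r)}_j / 2`.
-/

theorem Int.sum_Ico_sub {G : Type*} [AddCommGroup G] (f : ℤ → G) {a b : ℤ} (hab : a ≤ b) :
    ∑ l ∈ Finset.Ico a b, (f (l + 1) - f l) = f b - f a := by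
  induction b, hab using Int.leInduction with
  | base => simp
  | succ b hab ih =>
    rw [← Finset.sum_Ico_add_eq_sum_Ico_add_one hab, ih]
    abel

section Stretching

variable {h ω : ℝ} {σ : ℤ → ℝ}

theorem sum_range_toNat_succ_sub (hσneg : ∀ j : ℤ, j < 0 → σ j = 0) (k : ℤ) :
    ∑ l ∈ Finset.range (k + 1).toNat, ((σ l : ℝ) : ℂ) -
      ∑ l ∈ Finset.range k.toNat, ((σ l : ℝ) : ℂ) = σ k := by
  rcases le_or_gt 0 k with hk | hk
  · rw [show (k + 1).toNat = k.toNat + 1 by omega, Finset.sum_range_succ, Int.toNat_of_nonneg hk,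
      add_sub_cancel_left]
  · rw [Int.toNat_of_nonpos hk.le, Int.toNat_of_nonpos (by omega), hσneg k hk]
    simp

theorem Zmap_sub_of_antidiag (hσneg : ∀ j : ℤ, j < 0 → σ j = 0) (j k : ℤ) :
    Zmap h ω σ j (k + 1) - Zmap h ω σ (j + 1) k = Complex.I * (h / ω) * σ k := by
  rw [Zmap, Zmap, ← sum_range_toNat_succ_sub hσneg k]
  push_cast
  ring

theorem Zmap_sub_of_diag (hσneg : ∀ j : ℤ, j < 0 → σ j = 0) (j k : ℤ) :
    Zmap h ω σ (j + 1) (k + 1) - Zmap h ω σ j k = 2 * h + Complex.I * (h / ω) * σ k := by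
  rw [Zmap, Zmap, ← sum_range_toNat_succ_sub hσneg k]
  push_cast
  ring

theorem two_mul_I_mul_sub_ofReal_ne_zero (hω : ω ≠ 0) (s : ℝ) :
    2 * Complex.I * ω - s ≠ 0 := by
  intro h0
  exact hω (by simpa using congrArg Complex.im h0)

theorem psiAux_eq (hω : ω ≠ 0) (V : ℤ → ℤ → ℂ) (r j : ℤ) :
    PsiAux h ω σ V r j = (V r j - V (r - 1) (j - 1)) / ((2 * Complex.I * ω - σ (j - 1)) * h) := by
  have hωc : (ω : ℂ) ≠ 0 := Complex.ofReal_ne_zero.mpr hω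
  rw [PsiAux]
  congr 1
  field_simp
  linear_combination ((σ (j - 1) : ℂ) * h) * Complex.I_mul_I

theorem I_mul_ofReal_mul_psiAux (hh : h ≠ 0) (hω : ω ≠ 0) (V : ℤ → ℤ → ℂ) (r j : ℤ) :
    Complex.I * ω * PsiAux h ω σ V r j =
      (V r j - V (r - 1) (j - 1)) / (2 * h) + σ (j - 1) * PsiAux h ω σ V r j / 2 := by
  have hhc : (h : ℂ) ≠ 0 := Complex.ofReal_ne_zero.mpr hh
  have hD := mul_ne_zero (two_mul_I_mul_sub_ofReal_ne_zero hω (σ (j - 1))) hhc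
  rw [← div_mul_cancel₀ (V r j - V (r - 1) (j - 1)) hD, ← psiAux_eq hω]
  field_simp
  ring

end Stretching

section Holomorphic

variable {h ω : ℝ} {σ : ℤ → ℝ} {V : ℤ → ℤ → ℂ}

theorem DiscreteHolo.sub_antidiag_eq (hholo : DiscreteHolo h ω σ V)
    (hσneg : ∀ j : ℤ, j < 0 → σ j = 0) (hh : h ≠ 0) (hω : ω ≠ 0) (m n : ℤ) :
    V (m - 1) (n + 1) - V m n = -(σ n * h * PsiAux h ω σ V m (n + 1)) := by
  have hcr := hholo (m - 1) n
  rw [Zmap_sub_of_antidiag hσneg, Zmap_sub_of_diag hσneg, sub_add_cancel] at hcr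
  have hhc : (h : ℂ) ≠ 0 := Complex.ofReal_ne_zero.mpr hh
  have hωc : (ω : ℂ) ≠ 0 := Complex.ofReal_ne_zero.mpr hω
  have hD := mul_ne_zero (two_mul_I_mul_sub_ofReal_ne_zero hω (σ n)) hhc
  rw [psiAux_eq hω, add_sub_cancel_right, ← mul_div_assoc, ← neg_div, eq_div_iff hD]
  field_simp at hcr
  linear_combination (-Complex.I * h) * hcr + (σ n * h * ((V m (n + 1) - V (m - 1) n) -
    (V (m - 1) (n + 1) - V m n))) * Complex.I_mul_I

theorem DiscreteHolo.sub_eq_sum_Ico (hholo : DiscreteHolo h ω σ V)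
    (hσneg : ∀ j : ℤ, j < 0 → σ j = 0) (hh : h ≠ 0) (hω : ω ≠ 0) (c d : ℤ) {a b : ℤ}
    (hab : a ≤ b) :
    V (c - b) (d + b) - V (c - a) (d + a) =
      -(h * ∑ l ∈ Finset.Ico a b, σ (d + l) * PsiAux h ω σ V (c - l) (d + l + 1)) := by
  rw [← Int.sum_Ico_sub (fun l => V (c - l) (d + l)) hab, Finset.mul_sum, ← Finset.sum_neg_distrib]
  refine Finset.sum_congr rfl fun l _ => ?_
  rw [sub_add_eq_sub_sub, ← add_assoc, hholo.sub_antidiag_eq hσneg hh hω]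
  ring

end Holomorphic

theorem stmt15_general
    (h : ℝ) (hh : 0 < h)
    (ω : ℝ) (hω : ω ≠ 0)
    (σ : ℤ → ℝ) (hσneg : ∀ j : ℤ, j < 0 → σ j = 0)
    (V : ℤ → ℤ → ℂ) (hholo : DiscreteHolo h ω σ V)
    (j : ℤ) (r : ℤ) (hr1 : 1 ≤ r) :
    Complex.I * (ω : ℂ) * PsiAux h ω σ V r j =
      (V 0 (j + r) - V 0 (j + r - 2)) / (2 * (h : ℂ)) +
      ((σ (j - 1) : ℂ) * PsiAux h ω σ V r j + (σ j : ℂ) * PsiAux h ω σ V r (j + 1)) / 2 +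
      ∑ l ∈ Finset.Icc (1 : ℤ) (r - 1),
        ((σ (j + l) : ℂ) * PsiAux h ω σ V (r - l) (j + l + 1) -
          (σ (j + l - 2) : ℂ) * PsiAux h ω σ V (r - l) (j + l - 1)) / 2 := by
  have hstep := hholo.sub_antidiag_eq hσneg hh.ne' hω r j
  have hupper := hholo.sub_eq_sum_Ico hσneg hh.ne' hω r j hr1
  have hlower : V 0 (j + r - 2) - V (r - 1) (j - 1) =
      -(h * ∑ l ∈ Finset.Ico 1 r, σ (j + l - 2) * PsiAux h ω σ V (r - l) (j + l - 1)) := by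
    convert hholo.sub_eq_sum_Ico hσneg hh.ne' hω r (j - 2) hr1 using 5 <;> ring_nf
  rw [sub_self] at hupper
  rw [I_mul_ofReal_mul_psiAux hh.ne' hω, Finset.Icc_sub_one_right_eq_Ico, ← Finset.sum_div,
    Finset.sum_sub_distrib]
  have hhc : (h : ℂ) ≠ 0 := Complex.ofReal_ne_zero.mpr hh.ne'
  field_simp
  linear_combination hlower - hupper - hstep

/-- the recursion for the auxiliary variables `Ψ̂^{(r)}_j`,
where `ṽ_j = V_{0,j}`. -/
theorem stmt15
    (p : ℕ) (hp : 1 ≤ p) (h : ℝ) (hh : 0 < h)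
    (a : ℤ → ℝ) (hsym : ∀ r : ℤ, a (-r) = a r)
    (ω : ℝ) (hω : ω ≠ 0)
    (σ : ℤ → ℝ) (hσ : ∀ j : ℤ, 0 ≤ σ j) (hσneg : ∀ j : ℤ, j < 0 → σ j = 0)
    (V : ℤ → ℤ → ℂ) (hholo : DiscreteHolo h ω σ V)
    (heq : ∀ j k : ℤ, (∑ r ∈ Finset.Icc (-(p : ℤ)) (p : ℤ), (a r : ℂ) * V (j + r) k) +
        (ω : ℂ) ^ 2 * V j k = 0)
    (j : ℤ) (r : ℤ) (hr1 : 1 ≤ r) (hrp : r ≤ (p : ℤ)) :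
    Complex.I * (ω : ℂ) * PsiAux h ω σ V r j =
      (V 0 (j + r) - V 0 (j + r - 2)) / (2 * (h : ℂ)) +
      ((σ (j - 1) : ℂ) * PsiAux h ω σ V r j + (σ j : ℂ) * PsiAux h ω σ V r (j + 1)) / 2 +
      ∑ l ∈ Finset.Icc (1 : ℤ) (r - 1),
        ((σ (j + l) : ℂ) * PsiAux h ω σ V (r - l) (j + l + 1) -
          (σ (j + l - 2) : ℂ) * PsiAux h ω σ V (r - l) (j + l - 1)) / 2 :=
  stmt15_general h hh ω hω σ hσneg V hholo j r hr1
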